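/- Let ψ be a k-form on an n-dimensional inner product space V, and let g(t) be a smooth family of inner products on V with g(0) = g and (d/dt)|_{t=0} g(t) = h. Then (d/dt)|_{t=0} ⟨ψ,ψ⟩_{g(t)} = −⟨h, Σ_{i,j} ⟨ι_{e_i}ψ, ι_{e_j}ψ⟩_g ω^i ⊗ ω^j⟩_g, where {e_i} is a g-orthonormal basis with dual basis {ω^i}, ⟨·,·⟩_{g(t)} is the inner product induced by g(t) on Λ^k V*, and the right-hand side pairing of symmetric 2-tensors is taken with respect to g. -/

import Mathlib

open Matrix

noncomputable section

def IsAltForm5 (n k : ℕ) (ψ : (Fin k → Fin n) → ℝ) : Prop :=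
  ∀ (σ : Equiv.Perm (Fin k)) (t : Fin k → Fin n),
    ψ (t ∘ σ) = (Equiv.Perm.sign σ : ℤ) * ψ t

def ins5 {n k : ℕ} (hk : 0 < k) (i : Fin n) (j : Fin (k - 1) → Fin n) : Fin k → Fin n :=
  fun a => Fin.cons (α := fun _ => Fin n) i j (Fin.cast (Nat.succ_pred_eq_of_pos hk).symm a)

/-- the inner product `⟨ψ,ψ⟩_G` on `Λ^k V*` induced by the inner product on `V` whose
matrix in the fixed basis is `G` (its inverse `G⁻¹` is the induced matrix on `V*`):
`⟨ψ,ψ⟩_G = (k!)⁻¹ Σ_{I,J} ψ_I ψ_J Π_r (G⁻¹)_{I_r J_r}`. -/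
def innerG5 {n k : ℕ} (G : Matrix (Fin n) (Fin n) ℝ) (ψ : (Fin k → Fin n) → ℝ) : ℝ :=
  (k.factorial : ℝ)⁻¹ * ∑ I : Fin k → Fin n, ∑ J : Fin k → Fin n,
    ψ I * ψ J * ∏ r : Fin k, G⁻¹ (I r) (J r)

/-! Since `g 0 = 1`, the entries of `(g t)⁻¹` have derivative `-h` at `0`, so differentiating
`∏ r, (g t)⁻¹ (I r) (J r)` leaves one term per slot `r`: it pairs `I r` with `J r` through `-h`
and forces `I = J` on the remaining slots. Moving slot `r` to the front by `r.cycleRange`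
multiplies both `ψ I` and `ψ J` by the same sign, so all `k` terms equal the one for `r = 0`,
and `k / k! = 1 / (k - 1)!`. -/

theorem Fin.prod_univ_erase_eq_prod_succAbove {M : Type*} [CommMonoid M] {m : ℕ}
    (f : Fin (m + 1) → M) (r : Fin (m + 1)) :
    ∏ s ∈ Finset.univ.erase r, f s = ∏ s, f (r.succAbove s) := by
  rw [← Finset.compl_singleton, ← Fin.image_succAbove_univ,
    Finset.prod_image fun _ _ _ _ h => r.succAbove_right_injective h]

theorem Matrix.prod_one_apply {ι κ R : Type*} [Fintype κ] [DecidableEq ι] [CommMonoidWithZero R]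
    (K L : κ → ι) : ∏ s, (1 : Matrix ι ι R) (K s) (L s) = if K = L then 1 else 0 := by
  simp only [one_apply, Fintype.prod_boole, funext_iff]

theorem IsAltForm5.mul_insertNth {n m : ℕ} {ψ : (Fin (m + 1) → Fin n) → ℝ}
    (halt : IsAltForm5 n (m + 1) ψ) (r : Fin (m + 1)) (i j : Fin n) (K : Fin m → Fin n) :
    ψ (r.insertNth i K) * ψ (r.insertNth j K) = ψ (Fin.cons i K) * ψ (Fin.cons j K) := by
  rw [← Fin.cons_comp_cycleRange, ← Fin.cons_comp_cycleRange, halt, halt]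
  have hsign :
      ((Equiv.Perm.sign r.cycleRange : ℤ) : ℝ) * (Equiv.Perm.sign r.cycleRange : ℤ) = 1 := by
    rw [← Int.cast_mul, ← Units.val_mul, Int.units_mul_self, Units.val_one, Int.cast_one]
  linear_combination (ψ (Fin.cons i K) * ψ (Fin.cons j K)) * hsign

-- Any Banach algebra norm on matrices lets us use `hasFDerivAt_ringInverse`; it induces the
-- entrywise topology, so the result does not depend on it.
open scoped Matrix.Norms.Operator in
theorem Matrix.hasDerivAt_inv_apply {ι : Type*} [Fintype ι] [DecidableEq ι]
    {G : ℝ → Matrix ι ι ℝ} {G' : Matrix ι ι ℝ} {t : ℝ}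
    (hG : ∀ i j, HasDerivAt (fun s => G s i j) (G' i j) t) (hdet : IsUnit (G t).det) (i j : ι) :
    HasDerivAt (fun s => (G s)⁻¹ i j) (-((G t)⁻¹ * G' * (G t)⁻¹) i j) t := by
  obtain ⟨u, hu⟩ := (Matrix.isUnit_iff_isUnit_det _).mpr hdet
  have hinv : HasDerivAt (fun s => Ring.inverse (G s))
      (-(Ring.inverse (G t) * G' * Ring.inverse (G t))) t := by
    have := (hu ▸ hasFDerivAt_ringInverse (𝕜 := ℝ) u).comp_hasDerivAt t
      (hasDerivAt_pi.2 fun i => hasDerivAt_pi.2 (hG i))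
    rw [← hu, Ring.inverse_unit]
    exact this
  simp only [nonsing_inv_eq_ringInverse]
  exact hasDerivAt_pi.1 (hasDerivAt_pi.1 hinv i) j

theorem hasDerivAt_innerG5 {n m : ℕ} {G : ℝ → Matrix (Fin n) (Fin n) ℝ}
    {G' : Matrix (Fin n) (Fin n) ℝ} {t : ℝ}
    (hG : ∀ i j, HasDerivAt (fun s => G s i j) (G' i j) t) (hdet : IsUnit (G t).det)
    (ψ : (Fin (m + 1) → Fin n) → ℝ) :
    HasDerivAt (fun s => innerG5 (G s) ψ)
      (((m + 1).factorial : ℝ)⁻¹ * ∑ I, ∑ J, ψ I * ψ J * ∑ r,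
        (∏ s, (G t)⁻¹ (I (r.succAbove s)) (J (r.succAbove s))) *
          -((G t)⁻¹ * G' * (G t)⁻¹) (I r) (J r)) t := by
  have hprod := fun I J : Fin (m + 1) → Fin n => HasDerivAt.fun_finsetProd (u := Finset.univ)
    fun r _ => Matrix.hasDerivAt_inv_apply hG hdet (I r) (J r)
  simp only [Fin.prod_univ_erase_eq_prod_succAbove, smul_eq_mul] at hprod
  exact .const_mul _ <| .fun_sum fun I _ => .fun_sum fun J _ => (hprod I J).const_mul _

theorem sum_sum_mul_prod_one_succAbove {ι R : Type*} [Fintype ι] [DecidableEq ι] [CommSemiring R]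
    {m : ℕ} (F : (Fin (m + 1) → ι) → (Fin (m + 1) → ι) → R) (h : Matrix ι ι R)
    (r : Fin (m + 1)) :
    ∑ I, ∑ J, F I J *
        ((∏ s, (1 : Matrix ι ι R) (I (r.succAbove s)) (J (r.succAbove s))) * h (I r) (J r))
      = ∑ i, ∑ j, h i j * ∑ K, F (r.insertNth i K) (r.insertNth j K) := by
  let e : ι × (Fin m → ι) ≃ (Fin (m + 1) → ι) := Fin.insertNthEquiv (fun _ => ι) r
  have he : ∀ p, e p = r.insertNth p.1 p.2 := fun _ => rfl
  rw [← e.sum_comp]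
  refine (Finset.sum_congr rfl fun p _ => (e.sum_comp _).symm).trans ?_
  simp only [he, Fintype.sum_prod_type, Fin.insertNth_apply_same,
    Fin.insertNth_apply_succAbove, Matrix.prod_one_apply, ite_mul, one_mul, zero_mul, mul_ite,
    mul_zero]
  refine Finset.sum_congr rfl fun i _ => ?_
  rw [Finset.sum_comm]
  refine Finset.sum_congr rfl fun j _ => ?_
  rw [Finset.mul_sum]
  refine Finset.sum_congr rfl fun K _ => ?_
  rw [Fintype.sum_ite_eq, mul_comm]

theorem IsAltForm5.sum_sum_mul_sum_prod_one_succAbove {n m : ℕ}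
    {ψ : (Fin (m + 1) → Fin n) → ℝ}
    (halt : IsAltForm5 n (m + 1) ψ) (h : Matrix (Fin n) (Fin n) ℝ) :
    ∑ I, ∑ J, ψ I * ψ J * ∑ r : Fin (m + 1),
        (∏ s, (1 : Matrix (Fin n) (Fin n) ℝ) (I (r.succAbove s)) (J (r.succAbove s))) *
          -h (I r) (J r)
      = -((m + 1) * ∑ i, ∑ j, h i j * ∑ K, ψ (Fin.cons i K) * ψ (Fin.cons j K)) := by
  calc _ = -∑ r : Fin (m + 1), ∑ I, ∑ J, ψ I * ψ J *
        ((∏ s, (1 : Matrix (Fin n) (Fin n) ℝ) (I (r.succAbove s)) (J (r.succAbove s))) *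
          h (I r) (J r)) := by
        simp only [mul_neg, Finset.mul_sum, Finset.sum_neg_distrib]
        congr 1
        exact (Finset.sum_congr rfl fun _ _ => Finset.sum_comm).trans Finset.sum_comm
    _ = _ := by
        simp only [sum_sum_mul_prod_one_succAbove, halt.mul_insertNth, Finset.sum_const,
          Finset.card_univ, Fintype.card_fin, nsmul_eq_mul, Nat.cast_add, Nat.cast_one]

theorem ins5_eq_cons {n m : ℕ} (hk : 0 < m + 1) (i : Fin n) (K : Fin m → Fin n) :
    ins5 hk i K = Fin.cons i K :=
  rfl

theorem stmt_5_general (n k : ℕ) (hk : 0 < k) (ψ : (Fin k → Fin n) → ℝ)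
    (halt : IsAltForm5 n k ψ)
    (g : ℝ → Matrix (Fin n) (Fin n) ℝ) (h : Matrix (Fin n) (Fin n) ℝ)
    (hg0 : g 0 = 1)
    (hgderiv : ∀ i j, HasDerivAt (fun t => g t i j) (h i j) 0) :
    HasDerivAt (fun t => innerG5 (g t) ψ)
      (-∑ i : Fin n, ∑ j : Fin n, h i j *
        (((k - 1).factorial : ℝ)⁻¹ *
          ∑ J : Fin (k - 1) → Fin n, ψ (ins5 hk i J) * ψ (ins5 hk j J))) 0 := by
  obtain ⟨m, rfl⟩ : ∃ m, k = m + 1 := ⟨k - 1, by omega⟩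
  have hvar := hasDerivAt_innerG5 hgderiv (by simp [hg0]) ψ
  simp only [hg0, inv_one, one_mul, mul_one] at hvar
  convert hvar using 1
  rw [halt.sum_sum_mul_sum_prod_one_succAbove, Nat.factorial_succ]
  simp only [ins5_eq_cons, Nat.add_sub_cancel, mul_left_comm (h _ _), ← Finset.mul_sum]
  push_cast
  field_simp
  -- the left side still sums over `Fin (m + 1 - 1) → Fin n`, defeq to `Fin m → Fin n`
  rfl

/-- first variation of `⟨ψ,ψ⟩_{g(t)}` under a variation of the metric.
The components are taken in a `g`-orthonormal basis (so `g(0) = 1` as a matrix), and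
`(d/dt)|₀ ⟨ψ,ψ⟩_{g(t)} = −⟨h, Σ_{i,j} ⟨ι_{eᵢ}ψ, ι_{eⱼ}ψ⟩ ωⁱ⊗ωʲ⟩
  = −Σ_{i,j} h_{ij} ⟨ι_{eᵢ}ψ, ι_{eⱼ}ψ⟩`. -/
theorem stmt_5 (n k : ℕ) (hk : 0 < k) (ψ : (Fin k → Fin n) → ℝ)
    (halt : IsAltForm5 n k ψ)
    (g : ℝ → Matrix (Fin n) (Fin n) ℝ) (h : Matrix (Fin n) (Fin n) ℝ)
    (hg0 : g 0 = 1) (hgsym : ∀ t, (g t).IsSymm) (hgpos : ∀ t, (g t).PosDef)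
    (hgderiv : ∀ i j, HasDerivAt (fun t => g t i j) (h i j) 0) :
    HasDerivAt (fun t => innerG5 (g t) ψ)
      (-∑ i : Fin n, ∑ j : Fin n, h i j *
        (((k - 1).factorial : ℝ)⁻¹ *
          ∑ J : Fin (k - 1) → Fin n, ψ (ins5 hk i J) * ψ (ins5 hk j J))) 0 :=
  stmt_5_general n k hk ψ halt g h hg0 hgderiv

end
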